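/- Let D be a fundamental discriminant and 2-adic integers n, r, m, f with v(n) = v(r) − n_2 < v(m) − 2n_2 and r² − 4mn = D f², where v is the 2-adic valuation and n_2 ≥ 1. If m/(n·2^{2n_2 − 2}) ∈ 8ℤ_2 and (−r/(n·2^{n_2}))² − D f²/(n² 2^{2n_2}) = m/(n·2^{2n_2 − 2}), then v(D) is even, hence v(D) ∈ {0, 2}. -/

import Mathlib

def IsFundamentalDiscriminant (D : ℤ) : Prop :=
  (Squarefree D ∧ D % 4 = 1) ∨
    (∃ d : ℤ, D = 4 * d ∧ Squarefree d ∧ (d % 4 = 2 ∨ d % 4 = 3))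

/-!
Since `m = 8 t · 2^(2 n₂ - 2) · n`, we have `4 m n = 8 t (2^n₂ n)²`, and `v(n) ≥ v(r) - n₂` makes
`‖2^n₂ n‖ ≤ ‖r‖`; hence `‖4 m n‖ < ‖r²‖`. By the ultrametric inequality `‖D f²‖ = ‖r²‖`, so
`v(D) + 2 v(f) = 2 v(r)` and `v(D)` is even. Of the possible values `0, 2, 3` of `v(D)` for a
fundamental discriminant, only `0` and `2` are even.
-/

theorem padicValInt_mul_two {a : ℤ} (ha : a ≠ 0) : padicValInt 2 (a * 2) = padicValInt 2 a + 1 :=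
  mod_cast padicValInt_mul_eq_succ (p := 2) a ha

theorem IsFundamentalDiscriminant.padicValInt_two {D : ℤ} (hD : IsFundamentalDiscriminant D) :
    padicValInt 2 D = 0 ∨ padicValInt 2 D = 2 ∨ padicValInt 2 D = 3 := by
  rcases hD with ⟨-, hD4⟩ | ⟨d, rfl, hd, hd4⟩
  · exact Or.inl (padicValInt.eq_zero_of_not_dvd (by omega))
  have hd0 := hd.ne_zero
  rw [show 4 * d = d * 2 * 2 by ring, padicValInt_mul_two (by omega), padicValInt_mul_two hd0]
  rcases hd4 with hd2 | hd3
  · obtain ⟨e, rfl⟩ : ∃ e, d = e * 2 := ⟨d / 2, by omega⟩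
    rw [padicValInt_mul_two (by omega), padicValInt.eq_zero_of_not_dvd (by omega)]
    simp
  · rw [padicValInt.eq_zero_of_not_dvd (by omega)]
    simp

namespace PadicInt

variable {p : ℕ} [Fact p.Prime]

theorem valuation_intCast (z : ℤ) : (z : ℤ_[p]).valuation = padicValInt p z := by
  rw [← Nat.cast_inj (R := ℤ), ← valuation_coe, coe_intCast, Padic.valuation_intCast]

theorem norm_le_of_valuation_le {x y : ℤ_[p]} (hy : y ≠ 0) (h : y.valuation ≤ x.valuation) :
    ‖x‖ ≤ ‖y‖ := by
  rcases eq_or_ne x 0 with rfl | hx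
  · simp
  · rw [norm_eq_zpow_neg_valuation hy]
    exact (norm_le_pow_iff_le_valuation x hx _).2 h

theorem valuation_eq_of_norm_eq {x y : ℤ_[p]} (hx : x ≠ 0) (hy : y ≠ 0) (h : ‖x‖ = ‖y‖) :
    x.valuation = y.valuation := by
  rw [norm_eq_zpow_neg_valuation hx, norm_eq_zpow_neg_valuation hy] at h
  have := zpow_right_injective₀ (by exact_mod_cast (Fact.out : p.Prime).pos)
    (by exact_mod_cast (Fact.out : p.Prime).ne_one) h
  omega

theorem norm_pow_mul_le_of_valuation_le_add {x y : ℤ_[p]} {k : ℕ} (hy : y ≠ 0)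
    (h : y.valuation ≤ x.valuation + k) : ‖(p : ℤ_[p]) ^ k * x‖ ≤ ‖y‖ := by
  rcases eq_or_ne x 0 with rfl | hx
  · simp
  · exact norm_le_of_valuation_le hy (by rw [valuation_p_pow_mul _ _ hx]; omega)

theorem even_padicValInt_of_sq_sub_eq_intCast_mul_sq (D : ℤ) {r e f : ℤ_[p]} (hr : r ≠ 0)
    (he : ‖e‖ < ‖r‖ ^ 2) (h : r ^ 2 - e = D * f ^ 2) : Even (padicValInt p D) := by
  have hnorm : ‖(D : ℤ_[p]) * f ^ 2‖ = ‖r ^ 2‖ := by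
    rw [← h, sub_eq_add_neg, IsUltrametricDist.norm_add_eq_max_of_norm_ne_norm, norm_neg,
      max_eq_left] <;> simp only [norm_pow, norm_neg, he.le, he.ne', ne_eq, not_false_eq_true]
  have hDf : (D : ℤ_[p]) * f ^ 2 ≠ 0 := norm_ne_zero_iff.1 (by simpa [hnorm] using hr)
  obtain ⟨hD, hf⟩ := mul_ne_zero_iff.1 hDf
  have hv := valuation_eq_of_norm_eq hDf (pow_ne_zero 2 hr) hnorm
  rw [valuation_mul hD hf, valuation_pow, valuation_pow, valuation_intCast] at hv
  exact ⟨r.valuation - f.valuation, by omega⟩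

end PadicInt

theorem norm_four_mul_mul_lt_sq {n r m : ℤ_[2]} {n2 : ℕ} (hn2 : 1 ≤ n2) (hr : r ≠ 0)
    (hv : n.valuation = r.valuation - n2)
    (hdiv : ∃ t : ℤ_[2], m = n * (2 : ℤ_[2]) ^ (2 * n2 - 2) * (8 * t)) :
    ‖4 * m * n‖ < ‖r‖ ^ 2 := by
  obtain ⟨t, rfl⟩ := hdiv
  have hsq : 4 * (n * 2 ^ (2 * n2 - 2) * (8 * t)) * n = 8 * t * (2 ^ n2 * n) ^ 2 := by
    obtain ⟨k, rfl⟩ := Nat.exists_eq_add_of_le' hn2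
    rw [show 2 * (k + 1) - 2 = 2 * k by omega]
    ring
  have hbound : ‖(2 : ℤ_[2]) ^ n2 * n‖ ≤ ‖r‖ := by
    exact_mod_cast PadicInt.norm_pow_mul_le_of_valuation_le_add hr (by omega)
  have h8t : ‖8 * t‖ < 1 := (PadicInt.norm_lt_one_iff_dvd _).2 ⟨4 * t, by push_cast; ring⟩
  calc ‖4 * (n * 2 ^ (2 * n2 - 2) * (8 * t)) * n‖ = ‖8 * t‖ * ‖(2 : ℤ_[2]) ^ n2 * n‖ ^ 2 := by
        rw [hsq, norm_mul, norm_pow]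
    _ ≤ ‖8 * t‖ * ‖r‖ ^ 2 := by gcongr
    _ < ‖r‖ ^ 2 := mul_lt_of_lt_one_left (by positivity) h8t

theorem fundamental_discriminant_even_valuation_general
    (D : ℤ) (hD : IsFundamentalDiscriminant D)
    (n r m f : ℤ_[2]) (n2 : ℕ) (hn2 : 1 ≤ n2)
    (hr : r ≠ 0)
    (hv1 : n.valuation = r.valuation - n2)
    (heq : r ^ 2 - 4 * m * n = (D : ℤ_[2]) * f ^ 2)
    (hdiv : ∃ t : ℤ_[2], m = n * (2 : ℤ_[2]) ^ (2 * n2 - 2) * (8 * t)) :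
    Even (padicValInt 2 D) ∧ (padicValInt 2 D = 0 ∨ padicValInt 2 D = 2) := by
  have heven := PadicInt.even_padicValInt_of_sq_sub_eq_intCast_mul_sq D hr
    (norm_four_mul_mul_lt_sq hn2 hr hv1 hdiv) heq
  refine ⟨heven, ?_⟩
  rcases hD.padicValInt_two with h | h | h
  · exact Or.inl h
  · exact Or.inr h
  · exact absurd (h ▸ heven) (by decide)

theorem fundamental_discriminant_even_valuation
    (D : ℤ) (hD : IsFundamentalDiscriminant D)
    (n r m f : ℤ_[2]) (n2 : ℕ) (hn2 : 1 ≤ n2)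
    (hn : n ≠ 0) (hr : r ≠ 0) (hm : m ≠ 0)
    (hv1 : n.valuation = r.valuation - n2)
    (hv2 : r.valuation - n2 < m.valuation - 2 * n2)
    (heq : r ^ 2 - 4 * m * n = (D : ℤ_[2]) * f ^ 2)
    (hdiv : ∃ t : ℤ_[2], m = n * (2 : ℤ_[2]) ^ (2 * n2 - 2) * (8 * t)) :
    Even (padicValInt 2 D) ∧ (padicValInt 2 D = 0 ∨ padicValInt 2 D = 2) :=
  fundamental_discriminant_even_valuation_general D hD n r m f n2 hn2 hr hv1 heq hdiv
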